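/- arXiv:1608.08948 — 5 statements merged into one kernel-verified Lean document; each statement's English description precedes it below -/
import Mathlib

section
/- Let ℓ ≥ 2, k ∈ {1,...,ℓ}, and let a, x₁,...,x_ℓ be positive integers such that x₁ + ... + x_ℓ ≤ aℓ - k. Then x₁·x₂·...·x_ℓ ≤ a^(ℓ-k)·(a-1)^k. -/
/-!
Write `a = q + 1`. By concavity of `log`, the secant through `(q, log q)` and `(q + 1, log (q + 1))`
lies above `log` at every natural number, i.e. `x ≤ q · (1 + 1/q) ^ (x - q)`. Multiplying these
bounds over all `x i` gives `∏ x i ≤ q ^ ℓ · (1 + 1/q) ^ (∑ x i - q ℓ)`, and `∑ x i - q ℓ ≤ ℓ - k`.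
-/

open Finset

namespace Nat

theorem mul_pow_mul_succ_pow_le_of_le {x q : ℕ} (hqx : q ≤ x) :
    x * q ^ x * (q + 1) ^ q ≤ q ^ (q + 1) * (q + 1) ^ x := by
  induction x, hqx using Nat.le_induction with
  | base => ring_nf; rfl
  | succ x hqx ih =>
    calc (x + 1) * q ^ (x + 1) * (q + 1) ^ q
        = ((x + 1) * q) * (q ^ x * (q + 1) ^ q) := by ring
      _ ≤ (x * (q + 1)) * (q ^ x * (q + 1) ^ q) := Nat.mul_le_mul_right _ (by nlinarith)
      _ = (q + 1) * (x * q ^ x * (q + 1) ^ q) := by ring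
      _ ≤ (q + 1) * (q ^ (q + 1) * (q + 1) ^ x) := by gcongr
      _ = q ^ (q + 1) * (q + 1) ^ (x + 1) := by ring

theorem mul_pow_mul_succ_pow_le_of_ge {x q : ℕ} (hxq : x ≤ q) :
    x * q ^ x * (q + 1) ^ q ≤ q ^ (q + 1) * (q + 1) ^ x := by
  refine Nat.decreasingInduction
    (motive := fun x _ ↦ x * q ^ x * (q + 1) ^ q ≤ q ^ (q + 1) * (q + 1) ^ x)
    (fun x hxq ih ↦ Nat.le_of_mul_le_mul_left ?_ q.succ_pos) (by ring_nf; rfl) hxq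
  calc (q + 1) * (x * q ^ x * (q + 1) ^ q)
      = (x * (q + 1)) * (q ^ x * (q + 1) ^ q) := by ring
    _ ≤ ((x + 1) * q) * (q ^ x * (q + 1) ^ q) := Nat.mul_le_mul_right _ (by nlinarith)
    _ = (x + 1) * q ^ (x + 1) * (q + 1) ^ q := by ring
    _ ≤ q ^ (q + 1) * (q + 1) ^ (x + 1) := ih
    _ = (q + 1) * (q ^ (q + 1) * (q + 1) ^ x) := by ring

/-- `x ≤ q · (1 + 1/q) ^ (x - q)` with denominators cleared: `x ↦ x · (q / (q + 1)) ^ x` increases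
up to `q` and decreases from `q + 1` on, where it takes the same value. -/
theorem mul_pow_mul_succ_pow_le (x q : ℕ) :
    x * q ^ x * (q + 1) ^ q ≤ q ^ (q + 1) * (q + 1) ^ x :=
  (le_total q x).elim mul_pow_mul_succ_pow_le_of_le mul_pow_mul_succ_pow_le_of_ge

end Nat

namespace Finset

variable {ι : Type*} (s : Finset ι) (x : ι → ℕ)

theorem prod_mul_pow_mul_succ_pow_le (q : ℕ) :
    (∏ i ∈ s, x i) * q ^ (∑ i ∈ s, x i) * (q + 1) ^ (q * #s)
      ≤ q ^ ((q + 1) * #s) * (q + 1) ^ (∑ i ∈ s, x i) :=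
  calc (∏ i ∈ s, x i) * q ^ (∑ i ∈ s, x i) * (q + 1) ^ (q * #s)
      = ∏ i ∈ s, x i * q ^ x i * (q + 1) ^ q := by
        rw [prod_mul_distrib, prod_mul_distrib, prod_pow_eq_pow_sum, prod_const, ← pow_mul]
    _ ≤ ∏ i ∈ s, q ^ (q + 1) * (q + 1) ^ x i :=
        prod_le_prod (fun _ _ ↦ Nat.zero_le _) fun i _ ↦ Nat.mul_pow_mul_succ_pow_le (x i) q
    _ = q ^ ((q + 1) * #s) * (q + 1) ^ (∑ i ∈ s, x i) := by
        rw [prod_mul_distrib, prod_const, prod_pow_eq_pow_sum, ← pow_mul]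

theorem prod_le_pow_mul_succ_pow {q r : ℕ} (hq : 0 < q) (hr : r ≤ #s)
    (hsum : ∑ i ∈ s, x i ≤ q * #s + r) :
    ∏ i ∈ s, x i ≤ q ^ (#s - r) * (q + 1) ^ r := by
  have hprod := prod_mul_pow_mul_succ_pow_le s x q
  generalize ∏ i ∈ s, x i = P at hprod ⊢
  generalize ∑ i ∈ s, x i = S at hsum hprod
  generalize #s = n at hr hsum hprod ⊢
  obtain ⟨t, ht⟩ : ∃ t, S + t = q * n + r := ⟨_, Nat.add_sub_of_le hsum⟩
  refine le_of_mul_le_mul_right (a := q ^ S * (q + 1) ^ (q * n)) ?_ (by positivity)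
  calc P * (q ^ S * (q + 1) ^ (q * n))
      ≤ q ^ ((q + 1) * n) * (q + 1) ^ S := by rw [← mul_assoc]; exact hprod
    _ = q ^ (n - r + S) * q ^ t * (q + 1) ^ S := by
        rw [← pow_add, add_one_mul]; congr 2; omega
    _ ≤ q ^ (n - r + S) * (q + 1) ^ t * (q + 1) ^ S := by gcongr; omega
    _ = q ^ (n - r) * (q + 1) ^ r * (q ^ S * (q + 1) ^ (q * n)) := by
        rw [mul_assoc, ← pow_add, add_comm t, ht, pow_add, pow_add]; ring

end Finset

theorem integer_am_gm_general (ℓ k a : ℕ) (x : Fin ℓ → ℕ)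
    (hk1 : 1 ≤ k) (hkℓ : k ≤ ℓ) (ha : 1 ≤ a)
    (hx : ∀ i, 1 ≤ x i)
    (hsum : ∑ i, x i ≤ a * ℓ - k) :
    ∏ i, x i ≤ a ^ (ℓ - k) * (a - 1) ^ k := by
  obtain ⟨q, rfl⟩ : ∃ q, a = q + 1 := ⟨a - 1, by omega⟩
  have hsum' : ∑ i, x i ≤ q * ℓ + (ℓ - k) := by rw [add_one_mul] at hsum; omega
  obtain rfl | hq := q.eq_zero_or_pos
  · have hℓ_le_sum : ℓ ≤ ∑ i, x i := by
      simpa using card_nsmul_le_sum univ x 1 fun i _ ↦ hx i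
    omega
  have h := prod_le_pow_mul_succ_pow univ x hq (r := ℓ - k) (by simp) (by simpa using hsum')
  simpa [Nat.sub_sub_self hkℓ, mul_comm] using h

theorem integer_am_gm (ℓ k a : ℕ) (x : Fin ℓ → ℕ)
    (hℓ : 2 ≤ ℓ) (hk1 : 1 ≤ k) (hkℓ : k ≤ ℓ) (ha : 1 ≤ a)
    (hx : ∀ i, 1 ≤ x i)
    (hsum : ∑ i, x i ≤ a * ℓ - k) :
    ∏ i, x i ≤ a ^ (ℓ - k) * (a - 1) ^ k :=
  integer_am_gm_general ℓ k a x hk1 hkℓ ha hx hsum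
end

section
/- Let ℓ ≥ 2, k ∈ {1,...,ℓ}, and let a, x₁,...,x_ℓ be positive integers such that x₁ + ... + x_ℓ ≤ aℓ - k. If x₁·x₂·...·x_ℓ = a^(ℓ-k)·(a-1)^k, then exactly k of the xᵢ are equal to a-1 and the remaining ℓ-k are equal to a. -/
open Finset

private lemma amgm_step_up (b x : ℕ) (hb : 1 ≤ b) (hx : b + 1 ≤ x)
    (h : x * b ^ x * (b+1) ^ b ≤ b ^ (b+1) * (b+1) ^ x) :
    (x+1) * b ^ (x+1) * (b+1) ^ b < b ^ (b+1) * (b+1) ^ (x+1) := by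
  have hx0 : 0 < x := by omega
  have hb0 : 0 < b := hb
  have hL0 : 0 < x * b ^ x * (b+1) ^ b :=
    Nat.mul_pos (Nat.mul_pos hx0 (pow_pos hb0 x)) (pow_pos (by omega) b)
  have hmul : (x+1) * b < (b+1) * x := by nlinarith
  have key : x * ((x+1) * b ^ (x+1) * (b+1) ^ b) < x * (b ^ (b+1) * (b+1) ^ (x+1)) := by
    calc x * ((x+1) * b ^ (x+1) * (b+1) ^ b)
        = ((x+1) * b) * (x * b ^ x * (b+1) ^ b) := by ring
      _ < ((b+1) * x) * (x * b ^ x * (b+1) ^ b) := by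
          exact Nat.mul_lt_mul_of_lt_of_le hmul le_rfl hL0
      _ ≤ ((b+1) * x) * (b ^ (b+1) * (b+1) ^ x) := Nat.mul_le_mul_left _ h
      _ = x * (b ^ (b+1) * (b+1) ^ (x+1)) := by ring
  exact lt_of_mul_lt_mul_left key (Nat.zero_le x)

private lemma amgm_step_down (b x : ℕ) (hx1 : 1 ≤ x) (hx : x + 1 ≤ b)
    (h : (x+1) * b ^ (x+1) * (b+1) ^ b ≤ b ^ (b+1) * (b+1) ^ (x+1)) :
    x * b ^ x * (b+1) ^ b < b ^ (b+1) * (b+1) ^ x := by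
  have hb0 : 0 < b := by omega
  have hL0 : 0 < x * b ^ x * (b+1) ^ b :=
    Nat.mul_pos (Nat.mul_pos hx1 (pow_pos hb0 x)) (pow_pos (by omega) b)
  have hmul : x * (b+1) < (x+1) * b := by nlinarith
  have key : (x * (b+1)) * (x * b ^ x * (b+1) ^ b)
      < (x * (b+1)) * (b ^ (b+1) * (b+1) ^ x) := by
    calc (x * (b+1)) * (x * b ^ x * (b+1) ^ b)
        < ((x+1) * b) * (x * b ^ x * (b+1) ^ b) :=
          Nat.mul_lt_mul_of_lt_of_le hmul le_rfl hL0
      _ = x * ((x+1) * b ^ (x+1) * (b+1) ^ b) := by ring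
      _ ≤ x * (b ^ (b+1) * (b+1) ^ (x+1)) := Nat.mul_le_mul_left _ h
      _ = (x * (b+1)) * (b ^ (b+1) * (b+1) ^ x) := by ring
  exact lt_of_mul_lt_mul_left key (Nat.zero_le _)

private lemma amgm_main_le (b : ℕ) (hb : 1 ≤ b) :
    ∀ x, x * b ^ x * (b+1) ^ b ≤ b ^ (b+1) * (b+1) ^ x := by
  have up : ∀ n, (b+1+n) * b ^ (b+1+n) * (b+1) ^ b ≤ b ^ (b+1) * (b+1) ^ (b+1+n) := by
    intro n
    induction n with
    | zero => exact le_of_eq (by ring)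
    | succ n ih =>
        exact (amgm_step_up b (b+1+n) hb (by omega) ih).le
  have down : ∀ n, (b-n) * b ^ (b-n) * (b+1) ^ b ≤ b ^ (b+1) * (b+1) ^ (b-n) := by
    intro n
    induction n with
    | zero => simp only [Nat.sub_zero]; exact le_of_eq (by ring)
    | succ n ih =>
        rcases Nat.eq_zero_or_pos (b - (n+1)) with h0 | hpos
        · rw [h0]; simp
        · set y := b - (n+1) with hy
          have hyy : b - n = y + 1 := by omega
          rw [hyy] at ih
          exact (amgm_step_down b y hpos (by omega) ih).le
  intro x
  rcases Nat.le_total x b with h | h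
  · have := down (b - x)
    rwa [show b - (b - x) = x by omega] at this
  · rcases Nat.eq_or_lt_of_le h with h' | h'
    · exact le_of_eq (by rw [← h']; ring)
    · have := up (x - (b+1))
      rwa [show b + 1 + (x - (b+1)) = x by omega] at this

private lemma amgm_main_lt (b x : ℕ) (hb : 1 ≤ b) (h1 : x ≠ b) (h2 : x ≠ b+1) :
    x * b ^ x * (b+1) ^ b < b ^ (b+1) * (b+1) ^ x := by
  rcases Nat.lt_or_ge x b with h | h
  · rcases Nat.eq_zero_or_pos x with rfl | hx1
    · have : 0 < b ^ (b+1) * (b+1) ^ 0 :=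
        Nat.mul_pos (pow_pos (by omega) _) (pow_pos (by omega) _)
      simpa using this
    · exact amgm_step_down b x hx1 (by omega) (amgm_main_le b hb (x+1))
  · have hx : b + 2 ≤ x := by omega
    have := amgm_step_up b (x-1) hb (by omega) (amgm_main_le b hb (x-1))
    rwa [show x - 1 + 1 = x by omega] at this

private lemma amgm_pow_lt (b m k ℓ : ℕ) (hb : 1 ≤ b) (hmk : m < k) (hkℓ : k ≤ ℓ) :
    b ^ k * (b+1) ^ (ℓ-k) < b ^ m * (b+1) ^ (ℓ-m) := by
  have h1 : b ^ k = b ^ m * b ^ (k-m) := by rw [← pow_add]; congr 1; omega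
  have h2 : (b+1) ^ (ℓ-m) = (b+1) ^ (k-m) * (b+1) ^ (ℓ-k) := by
    rw [← pow_add]; congr 1; omega
  have h3 : b ^ (k-m) < (b+1) ^ (k-m) := Nat.pow_lt_pow_left (by omega) (by omega)
  have hpos : 0 < b ^ m * (b+1) ^ (ℓ-k) :=
    Nat.mul_pos (pow_pos (by omega) _) (pow_pos (by omega) _)
  calc b ^ k * (b+1) ^ (ℓ-k) = b ^ (k-m) * (b ^ m * (b+1) ^ (ℓ-k)) := by rw [h1]; ring
    _ < (b+1) ^ (k-m) * (b ^ m * (b+1) ^ (ℓ-k)) :=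
        Nat.mul_lt_mul_of_lt_of_le h3 le_rfl hpos
    _ = b ^ m * (b+1) ^ (ℓ-m) := by rw [h2]; ring

theorem integer_am_gm_equality (ℓ k a : ℕ) (x : Fin ℓ → ℕ)
    (hℓ : 2 ≤ ℓ) (hk1 : 1 ≤ k) (hkℓ : k ≤ ℓ) (ha : 2 ≤ a)
    (hx : ∀ i, 1 ≤ x i)
    (hsum : ∑ i, x i ≤ a * ℓ - k)
    (heq : ∏ i, x i = a ^ (ℓ - k) * (a - 1) ^ k) :
    ({i : Fin ℓ | x i = a - 1} : Finset (Fin ℓ)).card = k ∧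
      ∀ i, x i = a - 1 ∨ x i = a := by
  obtain ⟨b, rfl⟩ : ∃ b, a = b + 1 := ⟨a - 1, by omega⟩
  have hb : 1 ≤ b := by omega
  simp only [Nat.add_sub_cancel] at heq ⊢
  set S := ∑ i, x i with hSdef
  have hM : (b + 1) * ℓ = b * ℓ + ℓ := by ring
  have hkM : k + S ≤ (b+1) * ℓ := by
    have hkl2 : k ≤ (b+1) * ℓ := le_trans hkℓ (Nat.le_mul_of_pos_left ℓ (by omega))
    omega
  -- Step 1: every value is b or b+1
  have hall : ∀ i, x i = b ∨ x i = b + 1 := by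
    intro j
    by_contra hj
    push_neg at hj
    have hstrict : ∏ i, (x i * b ^ x i * (b+1) ^ b)
        < ∏ i, (b ^ (b+1) * (b+1) ^ x i) := by
      apply Finset.prod_lt_prod
      · intro i _
        exact Nat.mul_pos (Nat.mul_pos (hx i) (pow_pos (by omega) _)) (pow_pos (by omega) _)
      · intro i _
        exact amgm_main_le b hb (x i)
      · exact ⟨j, Finset.mem_univ j, amgm_main_lt b (x j) hb hj.1 hj.2⟩
    have hL : ∏ i, (x i * b ^ x i * (b+1) ^ b)
        = (∏ i, x i) * b ^ S * ((b+1) ^ b) ^ ℓ := by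
      rw [Finset.prod_mul_distrib, Finset.prod_mul_distrib,
        Finset.prod_pow_eq_pow_sum, Finset.prod_const, Finset.card_univ, Fintype.card_fin]
    have hR : ∏ i, (b ^ (b+1) * (b+1) ^ x i)
        = (b ^ (b+1)) ^ ℓ * (b+1) ^ S := by
      rw [Finset.prod_mul_distrib, Finset.prod_const, Finset.prod_pow_eq_pow_sum,
        Finset.card_univ, Fintype.card_fin]
    rw [hL, hR, heq, ← pow_mul, ← pow_mul] at hstrict
    -- hstrict : (b+1)^(ℓ-k) * b^k * b^S * (b+1)^(b*ℓ) < b^((b+1)*ℓ) * (b+1)^S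
    set D := (b+1) * ℓ - k - S with hD
    have e1 : S + D = (ℓ - k) + b * ℓ := by omega
    have e2 : (b+1) * ℓ = (k + S) + D := by omega
    have h2 : b ^ (k+S) * (b+1) ^ (S+D) < b ^ (k+S) * (b ^ D * (b+1) ^ S) := by
      calc b ^ (k+S) * (b+1) ^ (S+D)
          = (b+1) ^ (ℓ-k) * b ^ k * b ^ S * (b+1) ^ (b * ℓ) := by
            rw [e1, pow_add, pow_add]; ring
        _ < b ^ ((b+1) * ℓ) * (b+1) ^ S := hstrict
        _ = b ^ (k+S) * (b ^ D * (b+1) ^ S) := by rw [e2, pow_add]; ring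
    have h3 : (b+1) ^ (S+D) < b ^ D * (b+1) ^ S :=
      lt_of_mul_lt_mul_left h2 (Nat.zero_le _)
    have h4 : b ^ D * (b+1) ^ S ≤ (b+1) ^ (S+D) := by
      rw [pow_add]
      calc b ^ D * (b+1) ^ S ≤ (b+1) ^ D * (b+1) ^ S :=
            Nat.mul_le_mul_right _ (Nat.pow_le_pow_left (by omega) D)
        _ = (b+1) ^ S * (b+1) ^ D := by ring
    omega
  -- Step 2: the count
  have hcard : ∀ i, x i = b ∨ x i = b + 1 → True := fun _ _ => trivial
  refine ⟨?_, hall⟩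
  set F : Finset (Fin ℓ) := Finset.filter (fun i => x i = b) Finset.univ with hF
  have hmem : ({i : Fin ℓ | x i = b} : Finset (Fin ℓ)) = F := rfl
  set m := F.card with hm
  have hmℓ : m ≤ ℓ := by
    calc m ≤ Finset.univ.card := Finset.card_filter_le _ _
      _ = ℓ := by rw [Finset.card_univ, Fintype.card_fin]
  have hsplit : (∏ i ∈ F, x i) * (∏ i ∈ Finset.filter (fun i => ¬ x i = b) Finset.univ, x i)
      = ∏ i, x i := Finset.prod_filter_mul_prod_filter_not _ _ _
  have hprodF : ∏ i ∈ F, x i = b ^ m := by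
    rw [Finset.prod_congr rfl (fun i hi => (Finset.mem_filter.mp hi).2), Finset.prod_const]
  have hcardc : (Finset.filter (fun i => ¬ x i = b) Finset.univ).card = ℓ - m := by
    have h1 : (Finset.filter (fun i => ¬ x i = b) Finset.univ) = Fᶜ := by
      rw [hF, Finset.compl_filter]
    rw [h1, Finset.card_compl, Fintype.card_fin, hm]
  have hprodC : ∏ i ∈ Finset.filter (fun i => ¬ x i = b) Finset.univ, x i = (b+1) ^ (ℓ - m) := by
    rw [Finset.prod_congr rfl (fun i hi => ?_), Finset.prod_const, hcardc]
    have := (Finset.mem_filter.mp hi).2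
    rcases hall i with h | h
    · exact absurd h this
    · exact h
  have hprodeq : b ^ m * (b+1) ^ (ℓ - m) = (b+1) ^ (ℓ-k) * b ^ k := by
    rw [← hprodF, ← hprodC, hsplit, heq]
  have heq2 : b ^ m * (b+1) ^ (ℓ - m) = b ^ k * (b+1) ^ (ℓ - k) := by rw [hprodeq]; ring
  by_contra hne
  rcases Nat.lt_or_ge m k with h | h
  · exact absurd heq2 (ne_of_gt (amgm_pow_lt b m k ℓ hb h hkℓ))
  · exact absurd heq2 (ne_of_lt (amgm_pow_lt b k m ℓ hb (by omega) hmℓ))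
end

section
/- Let G = ([n], w) be a multigraph (w : pairs → ℕ) with n ≥ 4 such that every 4-element set of vertices spans edges of total multiplicity at most 9, and every edge has multiplicity at least 1 (so the product of all edge multiplicities is positive). If some 3-element set X of vertices has total edge multiplicity S(X) ≥ 6, then S(X) = 6, the product of the three edge multiplicities inside X is at most 8, and w(xy) = 1 for every x ∈ X and y ∉ X. -/
open Finset

def pairs (n : ℕ) (X : Finset (Fin n)) : Finset (Fin n × Fin n) :=
  (X ×ˢ X).filter (fun p => p.1 < p.2)

def mgS (n : ℕ) (w : Fin n → Fin n → ℕ) (X : Finset (Fin n)) : ℕ :=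
  ∑ p ∈ pairs n X, w p.1 p.2

def mgP (n : ℕ) (w : Fin n → Fin n → ℕ) (X : Finset (Fin n)) : ℕ :=
  ∏ p ∈ pairs n X, w p.1 p.2

def IsNSQ (n s q : ℕ) (w : Fin n → Fin n → ℕ) : Prop :=
  ∀ X : Finset (Fin n), X.card = s → mgS n w X ≤ q

lemma mgS_eq (n : ℕ) (w : Fin n → Fin n → ℕ) (X : Finset (Fin n)) :
    mgS n w X = ∑ x ∈ X, ∑ y ∈ X, if x < y then w x y else 0 := by
  unfold mgS pairs
  rw [Finset.sum_filter, Finset.sum_product]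

lemma mgP_eq (n : ℕ) (w : Fin n → Fin n → ℕ) (X : Finset (Fin n)) :
    mgP n w X = ∏ x ∈ X, ∏ y ∈ X, if x < y then w x y else 1 := by
  unfold mgP pairs
  rw [Finset.prod_filter, Finset.prod_product]

lemma ite_pair_sum {n : ℕ} (w : Fin n → Fin n → ℕ) (hsym : ∀ i j, w i j = w j i)
    {a b : Fin n} (hab : a ≠ b) :
    ((if a < b then w a b else 0) + if b < a then w b a else 0) = w a b := by
  rcases hab.lt_or_gt with h|h
  · simp [h, h.not_gt]
  · simp [h, h.not_gt, hsym a b]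

lemma ite_pair_prod {n : ℕ} (w : Fin n → Fin n → ℕ) (hsym : ∀ i j, w i j = w j i)
    {a b : Fin n} (hab : a ≠ b) :
    ((if a < b then w a b else 1) * if b < a then w b a else 1) = w a b := by
  rcases hab.lt_or_gt with h|h
  · simp [h, h.not_gt]
  · simp [h, h.not_gt, hsym a b]

lemma mgS_three {n : ℕ} (w : Fin n → Fin n → ℕ) (hsym : ∀ i j, w i j = w j i)
    {a b c : Fin n} (hab : a ≠ b) (hac : a ≠ c) (hbc : b ≠ c) :
    mgS n w {a, b, c} = w a b + w a c + w b c := by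
  have h1 : a ∉ ({b, c} : Finset (Fin n)) := by simp [hab, hac]
  have h2 : b ∉ ({c} : Finset (Fin n)) := by simp [hbc]
  rw [mgS_eq]
  simp only [Finset.sum_insert h1, Finset.sum_insert h2, Finset.sum_singleton]
  rcases hab.lt_or_gt with g1|g1 <;> rcases hac.lt_or_gt with g2|g2 <;>
      rcases hbc.lt_or_gt with g3|g3 <;>
    first
      | exact absurd (g3.trans g2) (asymm g1)
      | exact absurd (g2.trans g3) (asymm g1)
      | (simp [g1, g2, g3, g1.not_gt, g2.not_gt, g3.not_gt, lt_irrefl,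
          hsym b a, hsym c a, hsym c b]; try ring)

lemma mgP_three {n : ℕ} (w : Fin n → Fin n → ℕ) (hsym : ∀ i j, w i j = w j i)
    {a b c : Fin n} (hab : a ≠ b) (hac : a ≠ c) (hbc : b ≠ c) :
    mgP n w {a, b, c} = w a b * w a c * w b c := by
  have h1 : a ∉ ({b, c} : Finset (Fin n)) := by simp [hab, hac]
  have h2 : b ∉ ({c} : Finset (Fin n)) := by simp [hbc]
  rw [mgP_eq]
  simp only [Finset.prod_insert h1, Finset.prod_insert h2, Finset.prod_singleton]
  rcases hab.lt_or_gt with g1|g1 <;> rcases hac.lt_or_gt with g2|g2 <;>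
      rcases hbc.lt_or_gt with g3|g3 <;>
    first
      | exact absurd (g3.trans g2) (asymm g1)
      | exact absurd (g2.trans g3) (asymm g1)
      | (simp [g1, g2, g3, g1.not_gt, g2.not_gt, g3.not_gt, lt_irrefl,
          hsym b a, hsym c a, hsym c b]; try ring)

lemma mgS_insert {n : ℕ} (w : Fin n → Fin n → ℕ) (hsym : ∀ i j, w i j = w j i)
    {X : Finset (Fin n)} {y : Fin n} (hy : y ∉ X) :
    mgS n w (insert y X) = mgS n w X + ∑ x ∈ X, w x y := by
  rw [mgS_eq, Finset.sum_insert hy]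
  have inner : ∀ x ∈ X, (∑ z ∈ insert y X, if x < z then w x z else 0)
      = (if x < y then w x y else 0) + ∑ z ∈ X, if x < z then w x z else 0 := by
    intro x hx
    rw [Finset.sum_insert hy]
  rw [Finset.sum_congr rfl inner, Finset.sum_insert hy, Finset.sum_add_distrib, mgS_eq]
  have : (∑ z ∈ X, if y < z then w y z else 0) + ∑ x ∈ X, (if x < y then w x y else 0)
      = ∑ x ∈ X, w x y := by
    rw [← Finset.sum_add_distrib]
    refine Finset.sum_congr rfl fun x hx => ?_
    have hxy : x ≠ y := fun h => hy (h ▸ hx)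
    rcases hxy.lt_or_gt with h|h
    · simp [h, h.not_gt]
    · simp [h, h.not_gt, hsym y x]
  simp [lt_irrefl]
  omega

example : True := trivial

theorem heavy_triple (n : ℕ) (hn : 4 ≤ n) (w : Fin n → Fin n → ℕ)
    (hsym : ∀ i j, w i j = w j i)
    (h49 : IsNSQ n 4 9 w)
    (hpos : ∀ i j, i ≠ j → 1 ≤ w i j)
    (X : Finset (Fin n)) (hX : X.card = 3) (hS : 6 ≤ mgS n w X) :
    mgS n w X = 6 ∧ mgP n w X ≤ 8 ∧
      ∀ x ∈ X, ∀ y, y ∉ X → w x y = 1 := by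
  have key : ∀ y, y ∉ X → mgS n w X = 6 ∧ ∀ x ∈ X, w x y = 1 := by
    intro y hy
    have hc4 : (insert y X).card = 4 := by rw [Finset.card_insert_of_notMem hy, hX]
    have h9 := h49 (insert y X) hc4
    rw [mgS_insert w hsym hy] at h9
    have hge : 3 ≤ ∑ x ∈ X, w x y := by
      calc (3:ℕ) = ∑ _x ∈ X, 1 := by rw [Finset.sum_const, hX, smul_eq_mul]
        _ ≤ _ := Finset.sum_le_sum fun x hx => hpos x y (fun h => hy (h ▸ hx))
    have hS6 : mgS n w X = 6 := by omega
    refine ⟨hS6, fun x hx => ?_⟩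
    have hsum3 : ∑ x ∈ X, w x y = 3 := by omega
    have h0 : ∑ x ∈ X, (w x y - 1) = 0 := by
      have heq : ∑ x ∈ X, (w x y - 1) + ∑ _x ∈ X, 1 = ∑ x ∈ X, w x y := by
        rw [← Finset.sum_add_distrib]
        refine Finset.sum_congr rfl fun z hz => ?_
        have := hpos z y (fun h => hy (h ▸ hz)); omega
      rw [Finset.sum_const, hX, smul_eq_mul] at heq
      omega
    have h1 := (Finset.sum_eq_zero_iff.mp h0) x hx
    have h2 := hpos x y (fun h => hy (h ▸ hx))
    omega
  obtain ⟨y0, hy0⟩ : ∃ y, y ∉ X := by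
    by_contra h; push_neg at h
    have : X = Finset.univ := Finset.eq_univ_iff_forall.mpr h
    rw [this, Finset.card_univ, Fintype.card_fin] at hX; omega
  have hS6 := (key y0 hy0).1
  refine ⟨hS6, ?_, fun x hx y hy => (key y hy).2 x hx⟩
  obtain ⟨a, b, c, hab, hac, hbc, hXabc⟩ := Finset.card_eq_three.mp hX
  subst hXabc
  rw [mgP_three w hsym hab hac hbc]
  rw [mgS_three w hsym hab hac hbc] at hS6
  have p1 := hpos a b hab
  have p2 := hpos a c hac
  have p3 := hpos b c hbc
  have hp : w a b ≤ 4 := by omega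
  have hq : w a c ≤ 4 := by omega
  interval_cases h : (w a b) <;> interval_cases h2 : (w a c) <;> omega
end

section
/- For every n ≥ 4, there is an (n,4,9)-multigraph G with all edge multiplicities in {1,2} whose product of edge multiplicities equals 2^(ex(n,{C₃,C₄})). Consequently ex_Π(n,4,9) ≥ 2^(ex(n,{C₃,C₄})). -/
/-!
Double the edges of an extremal {C₃,C₄}-free graph `G`; the product of multiplicities is then
`2 ^ e(G)`. Four edges on four vertices always close a triangle or a 4-cycle, so any four vertices
span at most three edges of `G`, and hence total multiplicity at most `6 + 3 = 9`.
-/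

open Finset

def C3C4Free {n : ℕ} (G : SimpleGraph (Fin n)) : Prop :=
  (∀ x y z : Fin n, G.Adj x y → G.Adj y z → G.Adj x z → False) ∧
  (∀ a b c d : Fin n, a ≠ c → b ≠ d →
    G.Adj a b → G.Adj b c → G.Adj c d → G.Adj d a → False)

noncomputable def exC34 (n : ℕ) : ℕ :=
  sSup {m | ∃ G : SimpleGraph (Fin n), C3C4Free G ∧ m = Nat.card G.edgeSet}

lemma pairs_map {k n : ℕ} (f : Fin k ↪o Fin n) (X : Finset (Fin k)) :
    pairs n (X.map f.toEmbedding) = (pairs k X).map (f.toEmbedding.prodMap f.toEmbedding) := by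
  ext ⟨a, b⟩
  simp only [pairs, mem_map, mem_filter, mem_product, Function.Embedding.prodMap, Prod.exists,
    Prod.mk.injEq, RelEmbedding.coe_toEmbedding, Function.Embedding.coeFn_mk, Prod.map]
  constructor
  · rintro ⟨⟨⟨i, hi, rfl⟩, ⟨j, hj, rfl⟩⟩, hlt⟩
    exact ⟨i, j, ⟨⟨hi, hj⟩, f.lt_iff_lt.mp hlt⟩, rfl, rfl⟩
  · rintro ⟨i, j, ⟨⟨hi, hj⟩, hlt⟩, rfl, rfl⟩
    exact ⟨⟨⟨i, hi, rfl⟩, ⟨j, hj, rfl⟩⟩, f.lt_iff_lt.mpr hlt⟩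

lemma mgS_map {k n : ℕ} (f : Fin k ↪o Fin n) (w : Fin n → Fin n → ℕ) (X : Finset (Fin k)) :
    mgS n w (X.map f.toEmbedding) = mgS k (fun i j => w (f i) (f j)) X := by
  rw [mgS, pairs_map, sum_map]
  rfl

lemma mgS_four (w : Fin 4 → Fin 4 → ℕ) :
    mgS 4 w univ = w 0 1 + w 0 2 + w 0 3 + w 1 2 + w 1 3 + w 2 3 := by
  rw [mgS, show pairs 4 univ = {(0, 1), (0, 2), (0, 3), (1, 2), (1, 3), (2, 3)} by decide]
  simp [add_assoc]

lemma C3C4Free.comap {m n : ℕ} {G : SimpleGraph (Fin n)} (hG : C3C4Free G) {f : Fin m → Fin n}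
    (hf : Function.Injective f) : C3C4Free (G.comap f) :=
  ⟨fun x y z => hG.1 (f x) (f y) (f z),
    fun a b c d hac hbd => hG.2 (f a) (f b) (f c) (f d) (hf.ne hac) (hf.ne hbd)⟩

def doubledWeight {n : ℕ} (G : SimpleGraph (Fin n)) [DecidableRel G.Adj] (i j : Fin n) : ℕ :=
  if G.Adj i j then 2 else 1

lemma C3C4Free.mgS_doubledWeight_univ_le {H : SimpleGraph (Fin 4)} [DecidableRel H.Adj]
    (hH : C3C4Free H) : mgS 4 (doubledWeight H) univ ≤ 9 := by
  obtain ⟨triangle, square⟩ := hH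
  have t012 := triangle 0 1 2
  have t013 := triangle 0 1 3
  have t023 := triangle 0 2 3
  have t123 := triangle 1 2 3
  have s0123 := square 0 1 2 3 (by decide) (by decide)
  have s0132 := square 0 1 3 2 (by decide) (by decide)
  have s0213 := square 0 2 1 3 (by decide) (by decide)
  -- orient every adjacency as `H.Adj i j` with `i < j`, as in the terms of `mgS_four`
  rw [H.adj_comm 3 0] at s0123
  rw [H.adj_comm 2 0, H.adj_comm 3 2] at s0132
  rw [H.adj_comm 2 1, H.adj_comm 3 0] at s0213
  rw [mgS_four]
  simp only [doubledWeight]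
  split_ifs <;> first | omega | (exfalso; solve_by_elim)

lemma C3C4Free.isNSQ_doubledWeight {n : ℕ} {G : SimpleGraph (Fin n)} [DecidableRel G.Adj]
    (hG : C3C4Free G) : IsNSQ n 4 9 (doubledWeight G) := by
  intro X hX
  rw [← X.map_orderEmbOfFin_univ hX, mgS_map]
  exact (hG.comap (X.orderEmbOfFin hX).injective).mgS_doubledWeight_univ_le

lemma card_filter_adj_pairs_univ {n : ℕ} (G : SimpleGraph (Fin n)) [DecidableRel G.Adj] :
    #((pairs n univ).filter fun p => G.Adj p.1 p.2) = #G.edgeFinset := by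
  apply card_bij (fun p _ => s(p.1, p.2))
  · rintro ⟨a, b⟩ hp
    simp only [pairs, mem_filter] at hp
    simpa using hp.2
  · rintro ⟨a, b⟩ hp ⟨c, d⟩ hq h
    simp only [pairs, mem_filter] at hp hq
    rcases Sym2.eq_iff.mp h with ⟨rfl, rfl⟩ | ⟨rfl, rfl⟩
    · rfl
    · exact absurd hq.1.2 (asymm hp.1.2)
  · intro e he
    induction e using Sym2.ind with
    | _ x y =>
      rw [SimpleGraph.mem_edgeFinset, SimpleGraph.mem_edgeSet] at he
      rcases (G.ne_of_adj he).lt_or_gt with h | h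
      · exact ⟨(x, y), by simp [pairs, h, he], rfl⟩
      · exact ⟨(y, x), by simp [pairs, h, he.symm], Sym2.eq_swap⟩

lemma mgP_doubledWeight_univ {n : ℕ} (G : SimpleGraph (Fin n)) [DecidableRel G.Adj] :
    mgP n (doubledWeight G) univ = 2 ^ #G.edgeFinset := by
  rw [mgP, ← card_filter_adj_pairs_univ]
  simp only [doubledWeight]
  rw [prod_ite, prod_const_one, mul_one, prod_const]

lemma exists_c3c4Free_card_edgeSet_eq_exC34 (n : ℕ) :
    ∃ G : SimpleGraph (Fin n), C3C4Free G ∧ Nat.card G.edgeSet = exC34 n := by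
  have hempty : C3C4Free (⊥ : SimpleGraph (Fin n)) :=
    ⟨fun _ _ _ h => h.elim, fun _ _ _ _ _ _ h => h.elim⟩
  have hbdd : BddAbove {m | ∃ G : SimpleGraph (Fin n), C3C4Free G ∧ m = Nat.card G.edgeSet} :=
    ⟨Nat.card (Sym2 (Fin n)), by
      rintro _ ⟨G, -, rfl⟩
      exact Nat.card_le_card_of_injective _ Subtype.val_injective⟩
  obtain ⟨G, hG, hcard⟩ := Nat.sSup_mem (by exact ⟨0, ⊥, hempty, by simp⟩) hbdd
  exact ⟨G, hG, hcard.symm⟩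

theorem exPi_lower_bound_449_general (n : ℕ) :
    ∃ w : Fin n → Fin n → ℕ,
      (∀ i j, w i j = w j i) ∧
      IsNSQ n 4 9 w ∧
      (∀ i j : Fin n, i ≠ j → w i j = 1 ∨ w i j = 2) ∧
      mgP n w Finset.univ = 2 ^ exC34 n := by
  classical
  obtain ⟨G, hG, hcard⟩ := exists_c3c4Free_card_edgeSet_eq_exC34 n
  refine ⟨doubledWeight G, fun i j => by simp only [doubledWeight, G.adj_comm],
    hG.isNSQ_doubledWeight, fun i j _ => by unfold doubledWeight; split_ifs <;> simp, ?_⟩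
  rw [mgP_doubledWeight_univ, ← hcard, Nat.card_eq_fintype_card, SimpleGraph.edgeFinset_card]

theorem exPi_lower_bound_449 (n : ℕ) (hn : 4 ≤ n) :
    ∃ w : Fin n → Fin n → ℕ,
      (∀ i j, w i j = w j i) ∧
      IsNSQ n 4 9 w ∧
      (∀ i j : Fin n, i ≠ j → w i j = 1 ∨ w i j = 2) ∧
      mgP n w Finset.univ = 2 ^ exC34 n :=
  exPi_lower_bound_449_general n
end

section
/- Let n ≥ 4 and let G = ([n], w) be an (n,4,9)-multigraph with all multiplicities at least 1, and suppose some edge xy has multiplicity 3. Then every pair other than xy has multiplicity at most 2, and for every vertex z ∉ {x,y}, at most one of w(xz), w(yz) equals 2. -/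
open Finset

lemma two_mgS (n : ℕ) (w : Fin n → Fin n → ℕ) (hsym : ∀ i j, w i j = w j i)
    (X : Finset (Fin n)) :
    2 * mgS n w X = ∑ p ∈ X ×ˢ X, (if p.1 = p.2 then 0 else w p.1 p.2) := by
  classical
  rw [← Finset.sum_filter_add_sum_filter_not (X ×ˢ X) (fun p => p.1 < p.2)]
  have h1 : ∑ p ∈ (X ×ˢ X).filter (fun p => p.1 < p.2),
      (if p.1 = p.2 then 0 else w p.1 p.2) = mgS n w X := by
    apply Finset.sum_congr rfl
    intro p hp
    simp only [Finset.mem_filter] at hp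
    simp [hp.2.ne]
  have h2 : ∑ p ∈ (X ×ˢ X).filter (fun p => ¬ p.1 < p.2),
      (if p.1 = p.2 then 0 else w p.1 p.2) =
      ∑ p ∈ (X ×ˢ X).filter (fun p => p.2 < p.1),
      (if p.1 = p.2 then 0 else w p.1 p.2) := by
    symm
    apply Finset.sum_subset
    · intro p hp
      simp only [Finset.mem_filter] at hp ⊢
      exact ⟨hp.1, not_lt.2 hp.2.le⟩
    · intro p hp hp2
      simp only [Finset.mem_filter, not_lt] at hp hp2
      have : p.1 = p.2 := le_antisymm (not_lt.1 (fun h => hp2 ⟨hp.1, h⟩)) hp.2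
      simp [this]
  have h3 : ∑ p ∈ (X ×ˢ X).filter (fun p => p.2 < p.1),
      (if p.1 = p.2 then 0 else w p.1 p.2) = mgS n w X := by
    rw [mgS, pairs]
    apply Finset.sum_nbij' (i := Prod.swap) (j := Prod.swap)
    · intro p hp
      simp only [Finset.mem_filter, Finset.mem_product] at hp ⊢
      exact ⟨⟨hp.1.2, hp.1.1⟩, hp.2⟩
    · intro p hp
      simp only [Finset.mem_filter, Finset.mem_product] at hp ⊢
      exact ⟨⟨hp.1.2, hp.1.1⟩, hp.2⟩
    · intro p _; rfl
    · intro p _; rfl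
    · intro p hp
      simp only [Finset.mem_filter] at hp
      simp [hp.2.ne', Prod.swap, hsym p.1 p.2]
  rw [h1, h2, h3]; ring

lemma mgS_quad (n : ℕ) (w : Fin n → Fin n → ℕ) (hsym : ∀ i j, w i j = w j i)
    (a b c d : Fin n) (hab : a ≠ b) (hac : a ≠ c) (had : a ≠ d)
    (hbc : b ≠ c) (hbd : b ≠ d) (hcd : c ≠ d) :
    mgS n w ({a, b, c, d} : Finset (Fin n)) =
      w a b + w a c + w a d + w b c + w b d + w c d := by
  classical
  have hna : a ∉ ({b, c, d} : Finset (Fin n)) := by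
    simp only [Finset.mem_insert, Finset.mem_singleton, not_or]
    exact ⟨hab, hac, had⟩
  have hnb : b ∉ ({c, d} : Finset (Fin n)) := by
    simp only [Finset.mem_insert, Finset.mem_singleton, not_or]
    exact ⟨hbc, hbd⟩
  have hnc : c ∉ ({d} : Finset (Fin n)) := by
    simp only [Finset.mem_singleton]; exact hcd
  have h := two_mgS n w hsym ({a, b, c, d} : Finset (Fin n))
  rw [Finset.sum_product] at h
  have e : ∀ i : Fin n, ∑ j ∈ ({a, b, c, d} : Finset (Fin n)),
      (if i = j then 0 else w i j) =
      (if i = a then 0 else w i a) + (if i = b then 0 else w i b) +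
      (if i = c then 0 else w i c) + (if i = d then 0 else w i d) := by
    intro i
    rw [Finset.sum_insert hna, Finset.sum_insert hnb, Finset.sum_insert hnc,
        Finset.sum_singleton]
    ring
  rw [Finset.sum_congr rfl (fun i _ => e i)] at h
  rw [Finset.sum_insert hna, Finset.sum_insert hnb, Finset.sum_insert hnc,
      Finset.sum_singleton] at h
  simp only [eq_self_iff_true, if_true, if_pos rfl, if_neg hab, if_neg hac, if_neg had, if_neg hab.symm,
    if_neg hbc, if_neg hbd, if_neg hac.symm, if_neg hbc.symm, if_neg hcd,
    if_neg had.symm, if_neg hbd.symm, if_neg hcd.symm] at h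
  rw [hsym b a, hsym c a, hsym c b, hsym d a, hsym d b, hsym d c] at h
  omega

lemma card_quad (n : ℕ) (a b c d : Fin n) (hab : a ≠ b) (hac : a ≠ c) (had : a ≠ d)
    (hbc : b ≠ c) (hbd : b ≠ d) (hcd : c ≠ d) :
    ({a, b, c, d} : Finset (Fin n)).card = 4 := by
  rw [Finset.card_insert_of_notMem (by
        simp only [Finset.mem_insert, Finset.mem_singleton, not_or]
        exact ⟨hab, hac, had⟩),
      Finset.card_insert_of_notMem (by
        simp only [Finset.mem_insert, Finset.mem_singleton, not_or]
        exact ⟨hbc, hbd⟩),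
      Finset.card_insert_of_notMem (by simpa using hcd), Finset.card_singleton]

lemma exists_fourth (n : ℕ) (hn : 4 ≤ n) (a b c : Fin n) :
    ∃ t : Fin n, t ≠ a ∧ t ≠ b ∧ t ≠ c := by
  by_contra h
  push_neg at h
  have hsub : (Finset.univ : Finset (Fin n)) ⊆ {a, b, c} := by
    intro t _
    simp only [Finset.mem_insert, Finset.mem_singleton]
    by_cases h1 : t = a
    · exact Or.inl h1
    · by_cases h2 : t = b
      · exact Or.inr (Or.inl h2)
      · exact Or.inr (Or.inr (h t h1 h2))
  have hc := Finset.card_le_card hsub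
  simp only [Finset.card_univ, Fintype.card_fin] at hc
  have h3 : ({a, b, c} : Finset (Fin n)).card ≤ 3 :=
    (Finset.card_insert_le _ _).trans
      (Nat.succ_le_succ ((Finset.card_insert_le _ _).trans (by simp)))
  omega

lemma keyA (n : ℕ) (hn : 4 ≤ n) (w : Fin n → Fin n → ℕ)
    (hsym : ∀ i j, w i j = w j i) (h49 : IsNSQ n 4 9 w)
    (hpos : ∀ i j : Fin n, i ≠ j → 1 ≤ w i j)
    (x y : Fin n) (hxy : x ≠ y) (hw3 : w x y = 3)
    (p : Fin n) (hp1 : p ≠ x) (hp2 : p ≠ y) : w x p ≤ 2 := by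
  by_contra h
  push_neg at h
  obtain ⟨t, ht1, ht2, ht3⟩ := exists_fourth n hn x y p
  have hcard := card_quad n x y p t hxy hp1.symm ht1.symm hp2.symm ht2.symm ht3.symm
  have hq := mgS_quad n w hsym x y p t hxy hp1.symm ht1.symm hp2.symm ht2.symm ht3.symm
  have hb := h49 _ hcard
  rw [hq] at hb
  have e1 := hpos x t (Ne.symm ht1)
  have e2 := hpos y p (Ne.symm hp2)
  have e3 := hpos y t (Ne.symm ht2)
  have e4 := hpos p t (Ne.symm ht3)
  omega

lemma keyB (n : ℕ) (w : Fin n → Fin n → ℕ)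
    (hsym : ∀ i j, w i j = w j i) (h49 : IsNSQ n 4 9 w)
    (hpos : ∀ i j : Fin n, i ≠ j → 1 ≤ w i j)
    (x y : Fin n) (hxy : x ≠ y) (hw3 : w x y = 3)
    (u v : Fin n) (huv : u ≠ v) (hux : u ≠ x) (huy : u ≠ y)
    (hvx : v ≠ x) (hvy : v ≠ y) : w u v ≤ 2 := by
  by_contra h
  push_neg at h
  have hcard := card_quad n x y u v hxy hux.symm hvx.symm huy.symm hvy.symm huv
  have hq := mgS_quad n w hsym x y u v hxy hux.symm hvx.symm huy.symm hvy.symm huv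
  have hb := h49 _ hcard
  rw [hq] at hb
  have e1 := hpos x u hux.symm
  have e2 := hpos x v hvx.symm
  have e3 := hpos y u huy.symm
  have e4 := hpos y v hvy.symm
  omega

theorem multiplicity_three_structure (n : ℕ) (hn : 4 ≤ n) (w : Fin n → Fin n → ℕ)
    (hsym : ∀ i j, w i j = w j i)
    (h49 : IsNSQ n 4 9 w)
    (hpos : ∀ i j : Fin n, i ≠ j → 1 ≤ w i j)
    (x y : Fin n) (hxy : x ≠ y) (hw3 : w x y = 3) :
    (∀ u v : Fin n, u ≠ v → ({u, v} : Finset (Fin n)) ≠ {x, y} → w u v ≤ 2) ∧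
    (∀ z : Fin n, z ≠ x → z ≠ y → ¬(w x z = 2 ∧ w y z = 2)) := by
  have hw3' : w y x = 3 := by rw [hsym]; exact hw3
  constructor
  · intro u v huv hne
    by_cases hux : u = x
    · subst hux
      have hvy : v ≠ y := fun h => hne (by rw [h])
      exact keyA n hn w hsym h49 hpos u y hxy hw3 v (Ne.symm huv) hvy
    · by_cases huy : u = y
      · subst huy
        have hvx : v ≠ x := fun h => hne (by rw [h, Finset.pair_comm])
        rw [hsym] at hw3
        exact keyA n hn w hsym h49 hpos u x (Ne.symm hxy) hw3' v (Ne.symm huv) hvx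
      · by_cases hvx : v = x
        · subst hvx
          have huy' : u ≠ y := huy
          rw [hsym]
          exact keyA n hn w hsym h49 hpos v y hxy hw3 u huv huy'
        · by_cases hvy : v = y
          · subst hvy
            rw [hsym]
            exact keyA n hn w hsym h49 hpos v x (Ne.symm hxy) hw3' u huv hux
          · exact keyB n w hsym h49 hpos x y hxy hw3 u v huv hux huy hvx hvy
  · rintro z hzx hzy ⟨h1, h2⟩
    obtain ⟨t, ht1, ht2, ht3⟩ := exists_fourth n hn x y z
    have hcard := card_quad n x y z t hxy hzx.symm ht1.symm hzy.symm ht2.symm ht3.symm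
    have hq := mgS_quad n w hsym x y z t hxy hzx.symm ht1.symm hzy.symm ht2.symm ht3.symm
    have hb := h49 _ hcard
    rw [hq] at hb
    have e1 := hpos x t (Ne.symm ht1)
    have e2 := hpos y t (Ne.symm ht2)
    have e3 := hpos z t (Ne.symm ht3)
    omega
end
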